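/- arXiv:2304.02585 — 4 statements merged into one kernel-verified Lean document; each statement's English description precedes it below -/
import Mathlib

section
/- Let C be a category. Suppose we are given objects S, R', X', Y', R, X, Y, Z of C and morphisms a, b : S → X', f', g' : R' → X', q' : X' → Y', f, g : R → X, q : X → Y, θ : X' → X, s : Y' → Z and θ' : R' → R such that: (a) q is a coequalizer of the pair (f, g); (b) q' is a coequalizer of the pair (f', g'); (c) θ is a coequalizer of the pair (a, b); (d) s is a coequalizer of the pair (q' ∘ a, q' ∘ b); (e) θ' is an epimorphism; (f) θ ∘ f' = f ∘ θ' and θ ∘ g' = g ∘ θ'. Then there exists an isomorphism φ : Y ≅ Z such that s ∘ q' = φ ∘ q ∘ θ. -/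
open CategoryTheory CategoryTheory.Limits

theorem stmt_0 {C : Type*} [Category C] {S R' X' Y' R X Y Z : C}
    (a b : S ⟶ X') (f' g' : R' ⟶ X') (q' : X' ⟶ Y')
    (f g : R ⟶ X) (q : X ⟶ Y) (θ : X' ⟶ X) (s : Y' ⟶ Z) (θ' : R' ⟶ R)
    (wq : f ≫ q = g ≫ q) (hq : Nonempty (IsColimit (Cofork.ofπ q wq)))
    (wq' : f' ≫ q' = g' ≫ q') (hq' : Nonempty (IsColimit (Cofork.ofπ q' wq')))
    (wθ : a ≫ θ = b ≫ θ) (hθ : Nonempty (IsColimit (Cofork.ofπ θ wθ)))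
    (ws : (a ≫ q') ≫ s = (b ≫ q') ≫ s) (hs : Nonempty (IsColimit (Cofork.ofπ s ws)))
    (hepi : Epi θ')
    (hcf : f' ≫ θ = θ' ≫ f) (hcg : g' ≫ θ = θ' ≫ g) :
    ∃ φ : Y ≅ Z, q' ≫ s = θ ≫ q ≫ φ.hom := by
  obtain ⟨hq⟩ := hq; obtain ⟨hq'⟩ := hq'; obtain ⟨hθ⟩ := hθ; obtain ⟨hs⟩ := hs
  have hab : a ≫ q' ≫ s = b ≫ q' ≫ s := by
    rw [← Category.assoc, ws, Category.assoc]
  let k : X ⟶ Z := Cofork.IsColimit.desc hθ (q' ≫ s) hab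
  have hk : θ ≫ k = q' ≫ s := Cofork.IsColimit.π_desc' hθ (q' ≫ s) hab
  have hfgk : f ≫ k = g ≫ k := by
    have : θ' ≫ f ≫ k = θ' ≫ g ≫ k := by
      rw [← Category.assoc, ← hcf, ← Category.assoc, ← hcg,
        Category.assoc, Category.assoc, hk, ← Category.assoc, ← Category.assoc, wq']
    exact (cancel_epi θ').mp this
  let u : Y ⟶ Z := Cofork.IsColimit.desc hq k hfgk
  have hu : q ≫ u = k := Cofork.IsColimit.π_desc' hq k hfgk
  have hfg' : f' ≫ θ ≫ q = g' ≫ θ ≫ q := by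
    rw [← Category.assoc, hcf, ← Category.assoc, hcg, Category.assoc, Category.assoc, wq]
  let m : Y' ⟶ Y := Cofork.IsColimit.desc hq' (θ ≫ q) hfg'
  have hm : q' ≫ m = θ ≫ q := Cofork.IsColimit.π_desc' hq' (θ ≫ q) hfg'
  have habm : (a ≫ q') ≫ m = (b ≫ q') ≫ m := by
    rw [Category.assoc, hm, Category.assoc, hm, ← Category.assoc, wθ, Category.assoc]
  let v : Z ⟶ Y := Cofork.IsColimit.desc hs m habm
  have hv : s ≫ v = m := Cofork.IsColimit.π_desc' hs m habm
  have hkv : k ≫ v = q := by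
    apply Cofork.IsColimit.hom_ext hθ
    show θ ≫ k ≫ v = θ ≫ q
    rw [← Category.assoc, hk, Category.assoc, hv, hm]
  have huv : u ≫ v = 𝟙 Y := by
    apply Cofork.IsColimit.hom_ext hq
    show q ≫ u ≫ v = q ≫ 𝟙 Y
    rw [← Category.assoc, hu, hkv, Category.comp_id]
  have hmu : m ≫ u = s := by
    apply Cofork.IsColimit.hom_ext hq'
    show q' ≫ m ≫ u = q' ≫ s
    rw [← Category.assoc, hm, Category.assoc, hu, hk]
  have hvu : v ≫ u = 𝟙 Z := by
    apply Cofork.IsColimit.hom_ext hs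
    show s ≫ v ≫ u = s ≫ 𝟙 Z
    rw [← Category.assoc, hv, hmu, Category.comp_id]
  exact ⟨⟨u, v, huv, hvu⟩, by rw [hu]; exact hk.symm⟩
end

section
/- Let f : Y → X be a morphism of affine schemes. Suppose that (a) the underlying continuous map |f| : |Y| → |X| is surjective, and (b) the induced map on global sections f♯ : O(X) → O(Y) is injective. Then f is an epimorphism in the category of locally ringed spaces. -/
/-!
Two morphisms out of X that agree after composing with f have the same underlying map, as |f| is
surjective; it remains to cancel f♯ on sections over every open of X. As X is affine, the kernel
ideal sheaf of f is the one attached to the kernel of f♯ on global sections, which vanishes; so f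
is scheme-theoretically dominant, and a quasi-compact (here: affine source) such morphism is
injective on sections over every open.
-/

open CategoryTheory AlgebraicGeometry

lemma AlgebraicGeometry.IsSchemeTheoreticallyDominant.of_injective_appTop {X Y : Scheme}
    [IsAffine X] (f : Y ⟶ X) (hf : Function.Injective f.appTop) :
    IsSchemeTheoreticallyDominant f := by
  rw [isSchemeTheoreticallyDominant_iff, Scheme.ker_of_isAffine,
    (RingHom.injective_iff_ker_eq_bot _).mp hf]
  exact map_bot Scheme.IdealSheafData.equivOfIsAffine.symm

lemma AlgebraicGeometry.PresheafedSpace.epi_of_epi_base_of_mono_c {C : Type*} [Category C]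
    {X Y : PresheafedSpace C} (f : X ⟶ Y) (hbase : Epi f.base) (hc : ∀ U, Mono (f.c.app U)) :
    Epi f := by
  refine ⟨fun {Z} g g' hg => ?_⟩
  obtain ⟨gb, gc⟩ := g
  obtain ⟨gb', gc'⟩ := g'
  obtain rfl : gb = gb' := (cancel_epi f.base).mp (congrArg Hom.base hg)
  obtain rfl : gc = gc' := by
    ext V
    have hV := congr_app hg (Opposite.op V)
    simp only [comp_c_app] at hV
    erw [eqToHom_refl, CategoryTheory.Functor.map_id, Category.comp_id] at hV
    exact (cancel_mono _).mp hV
  rfl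

theorem stmt_6 {X Y : Scheme} [IsAffine X] [IsAffine Y] (f : Y ⟶ X)
    (hsurj : Function.Surjective f.base)
    (hinj : Function.Injective (f.app ⊤)) :
    Epi (Scheme.forgetToLocallyRingedSpace.map f) := by
  have := IsSchemeTheoreticallyDominant.of_injective_appTop f hinj
  apply Functor.epi_of_epi_map
    (LocallyRingedSpace.forgetToSheafedSpace ⋙ SheafedSpace.forgetToPresheafedSpace)
  exact PresheafedSpace.epi_of_epi_base_of_mono_c _ ((TopCat.epi_iff_surjective _).mpr hsurj)
    fun U => ConcreteCategory.mono_of_injective _ (f.app_injective U.unop)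
end

section
/- Let A be a ring, let e, f ∈ A be two central idempotents, and let π : A → A/⟨1−e, 1−f⟩ be the canonical projection onto the quotient of A by the two-sided ideal generated by 1−e and 1−f. Then for every pair of two-sided ideals I, J of A we have π(I ∩ J) = π(I) ∩ π(J). -/
theorem stmt_7 {A B : Type*} [Ring A] [Ring B] (e f : A)
    (he : IsIdempotentElem e) (hf : IsIdempotentElem f)
    (hec : e ∈ Set.center A) (hfc : f ∈ Set.center A)
    (π : A →+* B) (hsurj : Function.Surjective π)
    (hker : ∀ a : A, π a = 0 ↔ a ∈ TwoSidedIdeal.span {1 - e, 1 - f})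
    (I J : TwoSidedIdeal A) :
    π '' ((I ⊓ J : TwoSidedIdeal A) : Set A) = (π '' (I : Set A)) ∩ (π '' (J : Set A)) := by
  have hecomm : ∀ a : A, e * a = a * e := fun a =>
    (Set.mem_center_iff.mp hec).comm a
  have hfcomm : ∀ a : A, f * a = a * f := fun a =>
    (Set.mem_center_iff.mp hfc).comm a
  -- ideal K = {a | a * (e*f) = 0}
  let K : TwoSidedIdeal A := TwoSidedIdeal.mk' {a | a * (e * f) = 0}
    (by simp)
    (fun {x y} hx hy => by simp only [Set.mem_setOf_eq] at *; rw [add_mul, hx, hy, add_zero])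
    (fun {x} hx => by simp only [Set.mem_setOf_eq] at *; rw [neg_mul, hx, neg_zero])
    (fun {x y} hy => by simp only [Set.mem_setOf_eq] at *; rw [mul_assoc, hy, mul_zero])
    (fun {x y} hx => by
      simp only [Set.mem_setOf_eq] at *
      have hc : e * f * y = y * (e * f) := by
        rw [mul_assoc, hfcomm y, ← mul_assoc, hecomm y, mul_assoc]
      rw [mul_assoc, ← hc, ← mul_assoc, hx, zero_mul])
  have hK : ∀ a ∈ TwoSidedIdeal.span ({1 - e, 1 - f} : Set A), a * (e * f) = 0 := by
    intro a ha
    have := TwoSidedIdeal.mem_span_iff.mp ha K (by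
      intro x hx
      simp only [K, SetLike.mem_coe, TwoSidedIdeal.mem_mk', Set.mem_setOf_eq]
      rcases hx with h | h
      · subst h
        rw [sub_mul, one_mul, ← mul_assoc, he, sub_self]
      · simp only [Set.mem_singleton_iff] at h; subst h
        rw [sub_mul, one_mul, ← mul_assoc f e f, hfcomm e, mul_assoc, hf, sub_self])
    exact (TwoSidedIdeal.mem_mk' _ _ _ _ _ _ a).mp this
  have hπef : ∀ a : A, π (a * (e * f)) = π a := by
    intro a
    have : π (a * (e * f) - a) = 0 := by
      rw [hker]
      have : a * (e * f) - a = -(a * (1 - e)) - a * e * (1 - f) := by noncomm_ring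
      rw [this]
      exact TwoSidedIdeal.sub_mem _
        (TwoSidedIdeal.neg_mem _ (TwoSidedIdeal.mul_mem_left _ _ _
          (TwoSidedIdeal.subset_span (by simp))))
        (TwoSidedIdeal.mul_mem_left _ _ _ (TwoSidedIdeal.subset_span (by simp)))
    have := sub_eq_zero.mp (by rwa [map_sub] at this)
    exact this
  apply Set.Subset.antisymm
  · rintro x ⟨a, ha, rfl⟩
    exact ⟨⟨a, ha.1, rfl⟩, ⟨a, ha.2, rfl⟩⟩
  · rintro x ⟨⟨i, hi, rfl⟩, ⟨j, hj, hji⟩⟩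
    refine ⟨i * (e * f), ⟨TwoSidedIdeal.mul_mem_right _ _ _ hi, ?_⟩, hπef i⟩
    have hij : i - j ∈ TwoSidedIdeal.span ({1 - e, 1 - f} : Set A) := by
      rw [← hker, map_sub, hji, sub_self]
    have : i * (e * f) = j * (e * f) := by
      have h0 := hK _ hij
      rw [sub_mul] at h0
      exact sub_eq_zero.mp h0
    rw [this]
    exact TwoSidedIdeal.mul_mem_right _ _ _ hj
end

section
/- Let k be a field and let Q = k(ζ) be the field of rational functions in one variable ζ over k. Let a ∈ {0, 1} ⊆ k and b ∈ k, and consider the matrices A = [[b, ζ − a(b+1)], [0, −(a+b)]] and B = [[0, 0], [1, −a]] in M₂(Q). Then there is no one-dimensional Q-subspace of Q² which is invariant under both A and B; equivalently, there is no nonzero vector in Q² which is simultaneously an eigenvector of A and an eigenvector of B. -/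
open RatFunc in
/-- The matrix `A = [[b, ζ − a(b+1)], [0, −(a+b)]]` over `Q = k(ζ)`. -/
noncomputable def stmtMatA (k : Type*) [Field k] (a b : k) :
    Matrix (Fin 2) (Fin 2) (RatFunc k) :=
  !![RatFunc.C b, RatFunc.X - RatFunc.C a * (RatFunc.C b + 1);
     0, -(RatFunc.C a + RatFunc.C b)]

/-- The matrix `B = [[0, 0], [1, −a]]` over `Q = k(ζ)`. -/
noncomputable def stmtMatB (k : Type*) [Field k] (a : k) :
    Matrix (Fin 2) (Fin 2) (RatFunc k) :=
  !![0, 0; 1, -RatFunc.C a]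

lemma stmt15_X_ne_C {k : Type*} [Field k] (r : k) :
    (RatFunc.X : RatFunc k) ≠ RatFunc.C r := by
  intro h
  have h' : algebraMap (Polynomial k) (RatFunc k) Polynomial.X =
      algebraMap (Polynomial k) (RatFunc k) (Polynomial.C r) := h
  exact Polynomial.X_ne_C r (RatFunc.algebraMap_injective k h')

set_option synthInstance.maxHeartbeats 1000000 in
lemma stmt15_no_common_eig (k : Type*) [Field k] (a b : k) (ha : a = 0 ∨ a = 1) :
    ¬ ∃ v : Fin 2 → RatFunc k, v ≠ 0 ∧
        (∃ c : RatFunc k, (stmtMatA k a b).mulVec v = c • v) ∧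
        (∃ d : RatFunc k, (stmtMatB k a).mulVec v = d • v) := by
  rintro ⟨v, hv, ⟨c, hc⟩, ⟨d, hd⟩⟩
  have hc0 := congrFun hc 0
  have hc1 := congrFun hc 1
  have hd0 := congrFun hd 0
  have hd1 := congrFun hd 1
  simp [stmtMatA, stmtMatB, Matrix.mulVec, dotProduct,
    Fin.sum_univ_two] at hc0 hc1 hd0 hd1
  have hv1 : v 1 ≠ 0 := by
    intro h1
    have h0 : v 0 = 0 := by
      rcases hd0 with rfl | h0
      · simpa [h1] using hd1
      · exact h0
    exact hv (funext fun i => by fin_cases i <;> assumption)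
  have hcval : c = -RatFunc.C b + -RatFunc.C a := (hc1.resolve_right hv1).symm
  -- key: v 0 = 0 leads to contradiction
  have hv0 : v 0 ≠ 0 := by
    intro h0
    rw [h0, mul_zero, mul_zero, zero_add] at hc0
    rcases mul_eq_zero.1 hc0 with h | h
    · apply stmt15_X_ne_C (a * (b + 1))
      rw [sub_eq_zero] at h
      rw [h, map_mul, map_add, map_one]
    · exact hv1 h
  have hd' : d = 0 := hd0.resolve_right hv0
  rw [hd', zero_mul] at hd1
  have hx : v 0 = RatFunc.C a * v 1 := by linear_combination hd1
  rcases ha with rfl | rfl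
  · rw [map_zero, zero_mul] at hx
    exact hv0 hx
  · rw [map_one, one_mul] at hx
    rw [hx, hcval, map_one] at hc0
    have hX : (RatFunc.X - RatFunc.C (-b)) * v 1 = 0 := by
      rw [map_neg]
      linear_combination hc0
    rcases mul_eq_zero.1 hX with h | h
    · exact stmt15_X_ne_C (-b) (by rwa [sub_eq_zero] at h)
    · exact hv1 h

set_option synthInstance.maxHeartbeats 1000000 in
theorem stmt_15 (k : Type*) [Field k] (a b : k) (ha : a = 0 ∨ a = 1) :
    (¬ ∃ L : Submodule (RatFunc k) (Fin 2 → RatFunc k),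
        Module.finrank (RatFunc k) L = 1 ∧
        (∀ v ∈ L, (stmtMatA k a b).mulVec v ∈ L) ∧
        (∀ v ∈ L, (stmtMatB k a).mulVec v ∈ L)) ∧
    ¬ ∃ v : Fin 2 → RatFunc k, v ≠ 0 ∧
        (∃ c : RatFunc k, (stmtMatA k a b).mulVec v = c • v) ∧
        (∃ d : RatFunc k, (stmtMatB k a).mulVec v = d • v) := by
  refine ⟨?_, stmt15_no_common_eig k a b ha⟩
  rintro ⟨L, hL, hA, hB⟩
  obtain ⟨⟨v, hvL⟩, hv0, hgen⟩ := finrank_eq_one_iff'.1 hL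
  have hvne : v ≠ 0 := by
    intro h
    exact hv0 (Subtype.ext h)
  apply stmt15_no_common_eig k a b ha
  refine ⟨v, hvne, ?_, ?_⟩
  · obtain ⟨c, hc⟩ := hgen ⟨_, hA v hvL⟩
    exact ⟨c, (congrArg Subtype.val hc).symm⟩
  · obtain ⟨d, hd⟩ := hgen ⟨_, hB v hvL⟩
    exact ⟨d, (congrArg Subtype.val hd).symm⟩
end
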